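/- Let G be an unweighted directed graph on n nodes with adjacency matrix A, let I: ℝᵈ × ℝᵈ → ℝ₊ be a kernel, let ν^[1], …, ν^[n] ∈ ℝᵈ be fixed, and let γ > 0. For a permutation p of {1,…,n} set h^[k] = ν^[p_k], and define the log-likelihood ℓ(p) = Σ_{i,j: A_{ij}=1} ln f(h^[i], h^[j]) + Σ_{i,j: A_{ij}=0, i≠j} ln(1 - f(h^[i], h^[j])), where f(u,v) = 1/(1 + e^{γ I(u,v)}). Then for any two permutations p, p', ℓ(p) ≥ ℓ(p') if and only if Σ_{i,j} A_{ij} I(h^[i], h^[j]) ≤ Σ_{i,j} A_{ij} I(h'^[i], h'^[j]) where h'^[k] = ν^[p'_k]. In particular, a permutation maximizes the likelihood if and only if it minimizes the energy Σ_{i,j} A_{ij} I(h^[i], h^[j]). -/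

import Mathlib

open Real Finset

/-- for the generalized random graph model, a permutation has larger
log-likelihood iff it has smaller energy; in particular maximizing likelihood is
equivalent to minimizing the energy. -/
theorem general_rdrg_likelihood_iff_energy
    {n d : ℕ} (A : Matrix (Fin n) (Fin n) ℝ)
    (hA01 : ∀ i j, A i j = 0 ∨ A i j = 1)
    (hdiag : ∀ i, A i i = 0)
    (I : (Fin d → ℝ) → (Fin d → ℝ) → ℝ) (hI : ∀ u v, 0 ≤ I u v)
    (ν : Fin n → (Fin d → ℝ))
    (γ : ℝ) (hγ : 0 < γ)
    (f : (Fin d → ℝ) → (Fin d → ℝ) → ℝ)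
    (hf : ∀ u v, f u v = 1 / (1 + Real.exp (γ * I u v)))
    (ℓ : Equiv.Perm (Fin n) → ℝ)
    (hℓ : ∀ p, ℓ p =
        (∑ i, ∑ j, if A i j = 1 then Real.log (f (ν (p i)) (ν (p j))) else 0)
      + (∑ i, ∑ j, if A i j = 0 ∧ i ≠ j then Real.log (1 - f (ν (p i)) (ν (p j))) else 0))
    (E : Equiv.Perm (Fin n) → ℝ)
    (hE : ∀ p, E p = ∑ i, ∑ j, A i j * I (ν (p i)) (ν (p j))) :
    (∀ p p' : Equiv.Perm (Fin n), ℓ p' ≤ ℓ p ↔ E p ≤ E p') ∧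
    (∀ p : Equiv.Perm (Fin n),
      (∀ p', ℓ p' ≤ ℓ p) ↔ (∀ p', E p ≤ E p')) := by
  -- key: log(1 - f u v) = γ * I u v + log (f u v)
  have hfpos : ∀ u v : Fin d → ℝ, 0 < 1 + Real.exp (γ * I u v) := by
    intro u v; positivity
  have key : ∀ u v, Real.log (1 - f u v) = γ * I u v + Real.log (f u v) := by
    intro u v
    have h1 := hfpos u v
    have h2 : 1 - f u v = Real.exp (γ * I u v) / (1 + Real.exp (γ * I u v)) := by
      rw [hf]; field_simp; ring
    rw [h2, hf, Real.log_div (Real.exp_ne_zero _) h1.ne', Real.log_exp,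
      Real.log_div one_ne_zero h1.ne', Real.log_one]
    ring
  set g : Fin n → Fin n → ℝ :=
    fun a b => if a ≠ b then Real.log (1 - f (ν a) (ν b)) else 0 with hg
  set C : ℝ := ∑ i, ∑ j, g i j with hC
  have hdecomp : ∀ p : Equiv.Perm (Fin n), ℓ p = C - γ * E p := by
    intro p
    have hterm : ∀ i j : Fin n,
        (if A i j = 1 then Real.log (f (ν (p i)) (ν (p j))) else 0)
      + (if A i j = 0 ∧ i ≠ j then Real.log (1 - f (ν (p i)) (ν (p j))) else 0)
      = g (p i) (p j) - γ * (A i j * I (ν (p i)) (ν (p j))) := by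
      intro i j
      have hpij : p i ≠ p j ↔ i ≠ j := by
        constructor <;> intro h <;> simp_all
      by_cases hij : i = j
      · subst hij
        simp [hg, hdiag i]
      · rcases hA01 i j with h0 | h1
        · simp only [hg, h0, hij, hpij.mpr hij, if_pos, if_neg]
          simp [h0, hij]
        · have : A i j ≠ 0 := by rw [h1]; norm_num
          simp only [hg, h1, this, hij, hpij.mpr hij]
          simp only [if_pos, ne_eq, not_true_eq_false, false_and, if_false]
          rw [key]
          simp [hij]
    have hS : (∑ i, ∑ j, g (p i) (p j)) = C := by
      rw [hC]
      rw [← Equiv.sum_comp p (fun i => ∑ j, g i j)]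
      congr 1; funext i
      exact Equiv.sum_comp p (fun j => g (p i) j)
    rw [hℓ, hE]
    have h1 : (∑ i, ∑ j, if A i j = 1 then Real.log (f (ν (p i)) (ν (p j))) else 0)
      + (∑ i, ∑ j, if A i j = 0 ∧ i ≠ j then Real.log (1 - f (ν (p i)) (ν (p j))) else 0)
      = ∑ i, ∑ j, (g (p i) (p j) - γ * (A i j * I (ν (p i)) (ν (p j)))) := by
      rw [← Finset.sum_add_distrib]
      refine Finset.sum_congr rfl fun i _ => ?_
      rw [← Finset.sum_add_distrib]
      exact Finset.sum_congr rfl fun j _ => hterm i j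
    rw [h1]
    simp only [Finset.sum_sub_distrib, ← Finset.mul_sum]
    rw [hS]
  have main : ∀ p p' : Equiv.Perm (Fin n), ℓ p' ≤ ℓ p ↔ E p ≤ E p' := by
    intro p p'
    rw [hdecomp, hdecomp, sub_le_sub_iff_left, mul_le_mul_iff_right₀ hγ]
  exact ⟨main, fun p => ⟨fun h p' => (main p p').mp (h p'),
    fun h p' => (main p p').mpr (h p')⟩⟩
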